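/- arXiv:1503.00049 — 2 statements merged into one kernel-verified Lean document; each statement's English description precedes it below -/
import Mathlib

section
/- Let A and B be binary strings (over the alphabet {0,1}), each of length n, and let ℓ satisfy 1 ≤ ℓ ≤ n. Then A and B have a common abelian factor of length ℓ if and only if maxOne(B, ℓ) ≥ minOne(A, ℓ) and maxOne(A, ℓ) ≥ minOne(B, ℓ). -/
/-!
Sliding a length-`ℓ` window one position along a binary string changes its number of 1's by at
most one, so by a discrete intermediate value argument the 1-counts of the length-`ℓ` factors
form the whole interval `[minOne S ℓ, maxOne S ℓ]`. Two binary strings of the same length have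
equal Parikh vectors iff they have the same number of 1's, so a common abelian factor exists iff
the two intervals meet, which is exactly the pair of inequalities.
-/

/-- `A` and `B` have a common abelian factor of length `ℓ`: there exist factors
`u` of `A` and `v` of `B`, both of length `ℓ`, with equal Parikh vectors. -/
def HasCommonAbelianFactor (A B : List Bool) (ℓ : ℕ) : Prop :=
  ∃ u v : List Bool, u <:+: A ∧ v <:+: B ∧ u.length = ℓ ∧ v.length = ℓ ∧
    ∀ c : Bool, u.count c = v.count c

/-- The set of numbers of 1's of length-`ℓ` factors of the binary string `S`. -/
def factorOnesCounts (S : List Bool) (ℓ : ℕ) : Set ℕ :=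
  {k | ∃ w : List Bool, w <:+: S ∧ w.length = ℓ ∧ w.count true = k}

/-- `minOne S ℓ`: the minimum number of 1's over all length-`ℓ` factors of `S`. -/
noncomputable def minOne (S : List Bool) (ℓ : ℕ) : ℕ := sInf (factorOnesCounts S ℓ)

/-- `maxOne S ℓ`: the maximum number of 1's over all length-`ℓ` factors of `S`. -/
noncomputable def maxOne (S : List Bool) (ℓ : ℕ) : ℕ := sSup (factorOnesCounts S ℓ)

namespace List

variable {α : Type*} [BEq α]

theorem count_cons_le_add_one (a b : α) (l : List α) : (b :: l).count a ≤ l.count a + 1 := by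
  rw [count_cons]
  split <;> omega

theorem count_take_add_one_le (a : α) (l : List α) (m : ℕ) :
    (l.take (m + 1)).count a ≤ (l.take m).count a + 1 := by
  rw [take_add_one, count_append]
  have : l[m]?.toList.count a ≤ 1 := count_le_length.trans (by cases l[m]? <;> simp)
  omega

theorem count_take_tail_le (a : α) (l : List α) (ℓ : ℕ) :
    (l.tail.take ℓ).count a ≤ (l.take ℓ).count a + 1 ∧
      (l.take ℓ).count a ≤ (l.tail.take ℓ).count a + 1 := by
  rcases l with _ | ⟨x, t⟩
  · simp
  rcases ℓ with _ | m
  · simp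
  have hmono : (t.take m).count a ≤ (t.take (m + 1)).count a :=
    (take_prefix_take_left m.le_succ).count_le a
  have htake := count_take_add_one_le a t m
  have hcons := count_cons_le_add_one a x (t.take m)
  have hcons' := count_le_count_cons (a := a) (b := x) (l := t.take m)
  simp only [tail_cons, take_succ_cons]
  omega

theorem forall_count_eq_of_count_true_eq {u v : List Bool} (hlen : u.length = v.length)
    (htrue : u.count true = v.count true) (c : Bool) : u.count c = v.count c := by
  have hu := count_false_add_count_true u
  have hv := count_false_add_count_true v
  cases c <;> omega

end List

theorem intermediate_value_uIcc_of_step_le_one {f : ℕ → ℕ}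
    (hf : ∀ i, f (i + 1) ≤ f i + 1 ∧ f i ≤ f (i + 1) + 1) (a b : ℕ) :
    Set.uIcc (f a) (f b) ⊆ f '' Set.uIcc a b := by
  wlog hab : a ≤ b generalizing a b
  · simpa only [Set.uIcc_comm] using this b a (by omega)
  intro k hk
  rw [Set.mem_uIcc] at hk
  rw [Set.uIcc_of_le hab]
  induction b, hab using Nat.le_induction with
  | base => exact ⟨a, Set.left_mem_Icc.2 le_rfl, by omega⟩
  | succ b _ ih =>
    by_cases hkb : f a ≤ k ∧ k ≤ f b ∨ f b ≤ k ∧ k ≤ f a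
    · obtain ⟨i, hi, rfl⟩ := ih hkb
      exact ⟨i, Set.Icc_subset_Icc_right b.le_succ hi, rfl⟩
    · have := hf b
      exact ⟨b + 1, Set.right_mem_Icc.2 (by omega), by omega⟩

def onesInWindow (S : List Bool) (ℓ i : ℕ) : ℕ :=
  ((S.drop i).take ℓ).count true

theorem onesInWindow_succ_le (S : List Bool) (ℓ i : ℕ) :
    onesInWindow S ℓ (i + 1) ≤ onesInWindow S ℓ i + 1 ∧
      onesInWindow S ℓ i ≤ onesInWindow S ℓ (i + 1) + 1 := by
  simpa only [onesInWindow, List.tail_drop] using List.count_take_tail_le true (S.drop i) ℓ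

theorem mem_factorOnesCounts_iff {S : List Bool} {ℓ k : ℕ} :
    k ∈ factorOnesCounts S ℓ ↔ ∃ i, i + ℓ ≤ S.length ∧ onesInWindow S ℓ i = k := by
  constructor
  · rintro ⟨w, ⟨s, t, rfl⟩, rfl, rfl⟩
    refine ⟨s.length, by simp, ?_⟩
    simp [onesInWindow]
  · rintro ⟨i, hi, rfl⟩
    refine ⟨(S.drop i).take ℓ,
      (List.take_prefix _ _).isInfix.trans (S.drop_suffix i).isInfix, ?_, rfl⟩
    simp only [List.length_take, List.length_drop]
    omega

theorem factorOnesCounts_nonempty {S : List Bool} {ℓ : ℕ} (h : ℓ ≤ S.length) :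
    (factorOnesCounts S ℓ).Nonempty :=
  ⟨_, mem_factorOnesCounts_iff.2 ⟨0, by omega, rfl⟩⟩

theorem bddAbove_factorOnesCounts (S : List Bool) (ℓ : ℕ) : BddAbove (factorOnesCounts S ℓ) :=
  ⟨ℓ, fun _ ⟨_, _, hlen, hk⟩ => hk ▸ hlen ▸ List.count_le_length⟩

theorem ordConnected_factorOnesCounts (S : List Bool) (ℓ : ℕ) :
    (factorOnesCounts S ℓ).OrdConnected := by
  refine ⟨fun x hx y hy k hk => ?_⟩
  obtain ⟨a, ha, rfl⟩ := mem_factorOnesCounts_iff.1 hx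
  obtain ⟨b, hb, rfl⟩ := mem_factorOnesCounts_iff.1 hy
  obtain ⟨i, hi, rfl⟩ := intermediate_value_uIcc_of_step_le_one (onesInWindow_succ_le S ℓ) a b
    (Set.Icc_subset_uIcc hk)
  have : i ≤ max a b := hi.2
  exact mem_factorOnesCounts_iff.2 ⟨i, by omega, rfl⟩

theorem hasCommonAbelianFactor_iff_nonempty_inter {A B : List Bool} {ℓ : ℕ} :
    HasCommonAbelianFactor A B ℓ ↔ (factorOnesCounts A ℓ ∩ factorOnesCounts B ℓ).Nonempty := by
  constructor
  · rintro ⟨u, v, hu, hv, hlu, hlv, hc⟩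
    exact ⟨u.count true, ⟨u, hu, hlu, rfl⟩, ⟨v, hv, hlv, (hc true).symm⟩⟩
  · rintro ⟨_, ⟨u, hu, hlu, rfl⟩, ⟨v, hv, hlv, hc⟩⟩
    exact ⟨u, v, hu, hv, hlu, hlv,
      List.forall_count_eq_of_count_true_eq (hlu.trans hlv.symm) hc.symm⟩

theorem Nat.inter_nonempty_iff_sInf_le_sSup {s t : Set ℕ} (hs : s.Nonempty) (ht : t.Nonempty)
    (hs_bdd : BddAbove s) (ht_bdd : BddAbove t) (hs_conn : s.OrdConnected)
    (ht_conn : t.OrdConnected) :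
    (s ∩ t).Nonempty ↔ sInf s ≤ sSup t ∧ sInf t ≤ sSup s := by
  constructor
  · rintro ⟨k, hks, hkt⟩
    exact ⟨(Nat.sInf_le hks).trans (le_csSup ht_bdd hkt),
      (Nat.sInf_le hkt).trans (le_csSup hs_bdd hks)⟩
  · rintro ⟨hst, hts⟩
    have hs_le : sInf s ≤ sSup s := Nat.sInf_le (Nat.sSup_mem hs hs_bdd)
    have ht_le : sInf t ≤ sSup t := Nat.sInf_le (Nat.sSup_mem ht ht_bdd)
    refine ⟨max (sInf s) (sInf t), ?_, ?_⟩
    · exact hs_conn.out (Nat.sInf_mem hs) (Nat.sSup_mem hs hs_bdd)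
        ⟨le_max_left _ _, max_le hs_le hts⟩
    · exact ht_conn.out (Nat.sInf_mem ht) (Nat.sSup_mem ht ht_bdd)
        ⟨le_max_right _ _, max_le hst ht_le⟩

theorem hasCommonAbelianFactor_iff_minMax_general (n ℓ : ℕ) (A B : List Bool)
    (hA : A.length = n) (hB : B.length = n) (hℓn : ℓ ≤ n) :
    HasCommonAbelianFactor A B ℓ ↔
      maxOne B ℓ ≥ minOne A ℓ ∧ maxOne A ℓ ≥ minOne B ℓ := by
  rw [hasCommonAbelianFactor_iff_nonempty_inter, Nat.inter_nonempty_iff_sInf_le_sSup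
    (factorOnesCounts_nonempty (hA ▸ hℓn)) (factorOnesCounts_nonempty (hB ▸ hℓn))
    (bddAbove_factorOnesCounts A ℓ) (bddAbove_factorOnesCounts B ℓ)
    (ordConnected_factorOnesCounts A ℓ) (ordConnected_factorOnesCounts B ℓ)]
  rfl

/-- Binary strings `A`, `B` of length `n` have a common abelian factor of length
`ℓ` (with `1 ≤ ℓ ≤ n`) iff `maxOne B ℓ ≥ minOne A ℓ` and `maxOne A ℓ ≥ minOne B ℓ`. -/
theorem hasCommonAbelianFactor_iff_minMax (n ℓ : ℕ) (A B : List Bool)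
    (hA : A.length = n) (hB : B.length = n) (hℓ1 : 1 ≤ ℓ) (hℓn : ℓ ≤ n) :
    HasCommonAbelianFactor A B ℓ ↔
      maxOne B ℓ ≥ minOne A ℓ ∧ maxOne A ℓ ≥ minOne B ℓ :=
  hasCommonAbelianFactor_iff_minMax_general n ℓ A B hA hB hℓn
end

section
/- Let A and B be binary strings (over the alphabet {0,1}), each of length n, and let ℓ satisfy 1 ≤ ℓ ≤ n. For every integer k belonging to both intervals [minOne(A, ℓ), maxOne(A, ℓ)] and [minOne(B, ℓ), maxOne(B, ℓ)], there exist a factor u of A of length ℓ and a factor v of B of length ℓ such that |u|_1 = |v|_1 = k; in particular u and v have equal Parikh vectors and are common abelian factors of A and B of length ℓ. -/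
/-!
The number of ones in the length-`ℓ` window starting at position `i` is the difference of the
prefix counts `#₁ S[0, i + ℓ)` and `#₁ S[0, i)`, both monotone in `i` with steps of at most one;
so the window count changes by at most one when the window slides by one position. A discrete
intermediate value argument then shows that the ones-counts of the length-`ℓ` factors of `S`
form the whole interval `[minOne S ℓ, maxOne S ℓ]`. A common `k` is thus realised in `A` and in
`B`, and binary words of equal length with equally many ones have the same Parikh vector.
-/

theorem Nat.exists_eq_of_mem_uIcc_of_step_le_one {f : ℕ → ℕ}
    (hf : ∀ i, f (i + 1) ≤ f i + 1 ∧ f i ≤ f (i + 1) + 1) {a b k : ℕ} (hab : a ≤ b)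
    (hk : k ∈ Set.uIcc (f a) (f b)) : ∃ i ∈ Set.Icc a b, f i = k := by
  induction b, hab using Nat.le_induction with
  | base =>
    rw [Set.uIcc_self] at hk
    exact ⟨a, Set.left_mem_Icc.2 le_rfl, hk.symm⟩
  | succ b hab ih =>
    by_cases hkb : k ∈ Set.uIcc (f a) (f b)
    · obtain ⟨i, ⟨hai, hib⟩, rfl⟩ := ih hkb
      exact ⟨i, ⟨hai, hib.trans b.le_succ⟩, rfl⟩
    · refine ⟨b + 1, Set.right_mem_Icc.2 (hab.trans b.le_succ), ?_⟩
      simp only [Set.mem_uIcc] at hk hkb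
      have := hf b
      omega

theorem Set.OrdConnected.image_of_step_le_one {f : ℕ → ℕ}
    (hf : ∀ i, f (i + 1) ≤ f i + 1 ∧ f i ≤ f (i + 1) + 1) {s : Set ℕ}
    (hs : s.OrdConnected) : (f '' s).OrdConnected := by
  refine ⟨?_⟩
  rintro _ ⟨a, ha, rfl⟩ _ ⟨b, hb, rfl⟩ k hk
  have hk' := Set.Icc_subset_uIcc hk
  obtain ⟨i, hi, rfl⟩ : ∃ i ∈ Set.uIcc a b, f i = k := by
    rcases le_total a b with hab | hba
    · simpa [Set.uIcc_of_le hab] using Nat.exists_eq_of_mem_uIcc_of_step_le_one hf hab hk'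
    · simpa [Set.uIcc_of_ge hba] using
        Nat.exists_eq_of_mem_uIcc_of_step_le_one hf hba (by rwa [Set.uIcc_comm])
  exact ⟨i, hs.uIcc_subset ha hb hi, rfl⟩

namespace List

variable {α : Type*} [BEq α] (l : List α) (a : α)

theorem count_take_add (i j : ℕ) :
    (l.take (i + j)).count a = (l.take i).count a + ((l.drop i).take j).count a := by
  rw [take_add, count_append]

theorem count_take_succ_le (i : ℕ) : (l.take (i + 1)).count a ≤ (l.take i).count a + 1 := by
  rw [count_take_add]
  have : ((l.drop i).take 1).length ≤ 1 := by simp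
  have := count_le_length (a := a) (l := (l.drop i).take 1)
  omega

theorem count_take_drop_succ_le_add_one (ℓ i : ℕ) :
    ((l.drop (i + 1)).take ℓ).count a ≤ ((l.drop i).take ℓ).count a + 1 ∧
      ((l.drop i).take ℓ).count a ≤ ((l.drop (i + 1)).take ℓ).count a + 1 := by
  have h₀ := l.count_take_add a i ℓ
  have h₁ := l.count_take_add a (i + 1) ℓ
  have := (take_prefix_take_left (l := l) (Nat.le_add_right i 1)).count_le a
  have := l.count_take_succ_le a i
  have := (take_prefix_take_left (l := l) (Nat.le_add_right (i + ℓ) 1)).count_le a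
  have := l.count_take_succ_le a (i + ℓ)
  rw [Nat.add_right_comm] at h₁
  omega

end List

theorem List.IsInfix.exists_take_drop_eq {α : Type*} {w l : List α} (h : w <:+: l) :
    ∃ i, i + w.length ≤ l.length ∧ (l.drop i).take w.length = w := by
  obtain ⟨s, t, rfl⟩ := h
  refine ⟨s.length, by simp, ?_⟩
  rw [List.append_assoc, List.drop_left, List.take_left]

theorem factorOnesCounts_eq_image {S : List Bool} {ℓ : ℕ} (h : ℓ ≤ S.length) :
    factorOnesCounts S ℓ =
      (fun i => ((S.drop i).take ℓ).count true) '' Set.Iic (S.length - ℓ) := by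
  ext k
  constructor
  · rintro ⟨w, hw, rfl, rfl⟩
    obtain ⟨i, hi, hwi⟩ := hw.exists_take_drop_eq
    exact ⟨i, Set.mem_Iic.2 (by omega), congrArg (List.count true) hwi⟩
  · rintro ⟨i, hi, rfl⟩
    refine ⟨_, (List.take_prefix ℓ _).isInfix.trans (List.drop_suffix i S).isInfix, ?_, rfl⟩
    rw [Set.mem_Iic] at hi
    simp only [List.length_take, List.length_drop]
    omega

theorem Icc_minOne_maxOne_subset {S : List Bool} {ℓ : ℕ} (h : ℓ ≤ S.length) :
    Set.Icc (minOne S ℓ) (maxOne S ℓ) ⊆ factorOnesCounts S ℓ := by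
  have hord : (factorOnesCounts S ℓ).OrdConnected := by
    rw [factorOnesCounts_eq_image h]
    exact Set.ordConnected_Iic.image_of_step_le_one (S.count_take_drop_succ_le_add_one true ℓ)
  have hne : (factorOnesCounts S ℓ).Nonempty := by
    rw [factorOnesCounts_eq_image h]
    exact Set.nonempty_Iic.image _
  have hbdd : BddAbove (factorOnesCounts S ℓ) := by
    rw [factorOnesCounts_eq_image h]
    exact (Set.finite_Iic _).image _ |>.bddAbove
  exact hord.out (Nat.sInf_mem hne) (Nat.sSup_mem hne hbdd)

theorem exists_common_factor_with_k_ones_general (n ℓ k : ℕ) (A B : List Bool)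
    (hA : A.length = n) (hB : B.length = n) (hℓn : ℓ ≤ n)
    (hkA : k ∈ Set.Icc (minOne A ℓ) (maxOne A ℓ))
    (hkB : k ∈ Set.Icc (minOne B ℓ) (maxOne B ℓ)) :
    ∃ u v : List Bool, u <:+: A ∧ v <:+: B ∧ u.length = ℓ ∧ v.length = ℓ ∧
      u.count true = k ∧ v.count true = k ∧ ∀ c : Bool, u.count c = v.count c := by
  obtain ⟨u, huA, hul, huk⟩ := Icc_minOne_maxOne_subset (hA ▸ hℓn) hkA
  obtain ⟨v, hvB, hvl, hvk⟩ := Icc_minOne_maxOne_subset (hB ▸ hℓn) hkB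
  refine ⟨u, v, huA, hvB, hul, hvl, huk, hvk, Bool.forall_bool.2 ⟨?_, huk.trans hvk.symm⟩⟩
  have := u.count_false_add_count_true
  have := v.count_false_add_count_true
  omega

/-- For binary strings `A`, `B` of length `n`, `1 ≤ ℓ ≤ n`, and every integer `k`
lying in both intervals `[minOne A ℓ, maxOne A ℓ]` and `[minOne B ℓ, maxOne B ℓ]`,
there exist a factor `u` of `A` and a factor `v` of `B`, each of length `ℓ`, with
`|u|₁ = |v|₁ = k`; in particular `u` and `v` have equal Parikh vectors, so they are
common abelian factors of `A` and `B` of length `ℓ`. -/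
theorem exists_common_factor_with_k_ones (n ℓ k : ℕ) (A B : List Bool)
    (hA : A.length = n) (hB : B.length = n) (hℓ1 : 1 ≤ ℓ) (hℓn : ℓ ≤ n)
    (hkA : k ∈ Set.Icc (minOne A ℓ) (maxOne A ℓ))
    (hkB : k ∈ Set.Icc (minOne B ℓ) (maxOne B ℓ)) :
    ∃ u v : List Bool, u <:+: A ∧ v <:+: B ∧ u.length = ℓ ∧ v.length = ℓ ∧
      u.count true = k ∧ v.count true = k ∧ ∀ c : Bool, u.count c = v.count c :=
  exists_common_factor_with_k_ones_general n ℓ k A B hA hB hℓn hkA hkB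
end
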